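/- arXiv:2312.02579 — 4 statements merged into one kernel-verified Lean document; each statement's English description precedes it below -/
import Mathlib

section
/- Let F be a finite field, α a generator of the multiplicative group F^×, and m = |F| − 1 with m = m1 · m2 (m1, m2 positive integers). Let p be any polynomial over F, and let i1, i2 be natural numbers with i1 < m1 and i2 < m2. Set β = α^(i1 + m1·i2) and let p2 = p %ₘ (X^(m2) − C(α^(m2·i1))) be the remainder of p modulo X^(m2) − C(α^(m2·i1)). Then p.eval β = p2.eval β; in particular β is a root of p if and only if β is a root of p2. (Correctness of the inner-loop replacement in Algorithm 5.) -/
open Polynomial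

theorem pow_add_mul_pow_of_pow_mul_eq_one {M : Type*} [Monoid M] {a : M} {m1 m2 : ℕ}
    (ha : a ^ (m1 * m2) = 1) (i1 i2 : ℕ) :
    (a ^ (i1 + m1 * i2)) ^ m2 = a ^ (m2 * i1) := by
  rw [← pow_mul, add_mul, pow_add, mul_comm i1, mul_assoc, mul_comm i2, ← mul_assoc,
    pow_mul a (m1 * m2), ha, one_pow, mul_one]

-- No monicity is needed: `p %ₘ q = p` when `q` is not monic.
theorem eval_modByMonic_eq_self_of_root {R : Type*} [CommRing R] {p q : R[X]} {x : R}
    (hx : q.eval x = 0) : (p %ₘ q).eval x = p.eval x :=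
  eval₂_modByMonic_eq_self_of_root hx

theorem stmt_5_general {F : Type*} [Field F] [Fintype F] (α : Fˣ)
    (m1 m2 : ℕ)
    (hm : Fintype.card F - 1 = m1 * m2)
    (p : F[X]) (i1 i2 : ℕ) :
    p.eval ((α : F) ^ (i1 + m1 * i2)) =
      (p %ₘ ((X : F[X]) ^ m2 - C ((α : F) ^ (m2 * i1)))).eval
        ((α : F) ^ (i1 + m1 * i2)) ∧
    (p.IsRoot ((α : F) ^ (i1 + m1 * i2)) ↔
      (p %ₘ ((X : F[X]) ^ m2 - C ((α : F) ^ (m2 * i1)))).IsRoot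
        ((α : F) ^ (i1 + m1 * i2))) := by
  have hpow : ((α : F) ^ (i1 + m1 * i2)) ^ m2 = (α : F) ^ (m2 * i1) :=
    pow_add_mul_pow_of_pow_mul_eq_one
      (hm ▸ FiniteField.pow_card_sub_one_eq_one _ α.ne_zero) i1 i2
  have hroot :
      ((X : F[X]) ^ m2 - C ((α : F) ^ (m2 * i1))).eval ((α : F) ^ (i1 + m1 * i2)) = 0 := by
    rw [eval_sub, eval_pow, eval_X, eval_C, hpow, sub_self]
  have heval := (eval_modByMonic_eq_self_of_root (p := p) hroot).symm
  exact ⟨heval, by rw [IsRoot.def, IsRoot.def, heval]⟩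

/-- Correctness of the inner-loop replacement in Algorithm 5. -/
theorem stmt_5 {F : Type*} [Field F] [Fintype F] (α : Fˣ)
    (hα : ∀ x : Fˣ, x ∈ Subgroup.zpowers α)
    (m1 m2 : ℕ) (hm1 : 0 < m1) (hm2 : 0 < m2)
    (hm : Fintype.card F - 1 = m1 * m2)
    (p : F[X]) (i1 i2 : ℕ) (hi1 : i1 < m1) (hi2 : i2 < m2) :
    p.eval ((α : F) ^ (i1 + m1 * i2)) =
      (p %ₘ ((X : F[X]) ^ m2 - C ((α : F) ^ (m2 * i1)))).eval
        ((α : F) ^ (i1 + m1 * i2)) ∧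
    (p.IsRoot ((α : F) ^ (i1 + m1 * i2)) ↔
      (p %ₘ ((X : F[X]) ^ m2 - C ((α : F) ^ (m2 * i1)))).IsRoot
        ((α : F) ^ (i1 + m1 * i2))) :=
  stmt_5_general α m1 m2 hm p i1 i2
end

section
/- Let F be a finite field, α a generator of the multiplicative group F^×, and m = |F| − 1 with m = m1 · m2 (m1, m2 positive integers). For any polynomial p over F, the set of nonzero roots of p in F equals the set { α^(i1 + m1·i2) : 0 ≤ i1 < m1, 0 ≤ i2 < m2, and (p %ₘ (X^(m2) − C(α^(m2·i1)))).eval (α^(i1 + m1·i2)) = 0 }. (Full correctness of Algorithm 5: the two-cycle optimized search outputs exactly the nonzero roots of p.) -/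
/-!
Write the discrete logarithm of a nonzero `β` in mixed radix, `β = α ^ (i₁ + m₁ i₂)`.
Since `α ^ (m₁ m₂) = 1`, we get `β ^ m₂ = α ^ (m₂ i₁)`, so `β` is a root of
`X ^ m₂ - C (α ^ (m₂ i₁))` and reducing `p` modulo that polynomial does not change `p.eval β`.
-/

open Polynomial

lemma Nat.exists_add_mul_eq_of_lt_mul {m₁ m₂ k : ℕ} (hk : k < m₁ * m₂) :
    ∃ i₁ < m₁, ∃ i₂ < m₂, i₁ + m₁ * i₂ = k := by
  have hm₁ : 0 < m₁ := Nat.pos_of_mul_pos_right (Nat.zero_lt_of_lt hk)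
  exact ⟨k % m₁, Nat.mod_lt k hm₁, k / m₁, Nat.div_lt_of_lt_mul hk, Nat.mod_add_div k m₁⟩

lemma exists_pow_add_mul_eq_of_forall_mem_zpowers {G : Type*} [Group G] [Finite G] {α : G}
    (hα : ∀ x : G, x ∈ Subgroup.zpowers α) {m₁ m₂ : ℕ} (hcard : Nat.card G = m₁ * m₂)
    (x : G) : ∃ i₁ < m₁, ∃ i₂ < m₂, α ^ (i₁ + m₁ * i₂) = x := by
  classical
  obtain ⟨k, hk, rfl⟩ := Finset.mem_image.mp (mem_zpowers_iff_mem_range_orderOf.mp (hα x))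
  rw [Finset.mem_range, orderOf_eq_card_of_forall_mem_zpowers hα, hcard] at hk
  obtain ⟨i₁, hi₁, i₂, hi₂, rfl⟩ := Nat.exists_add_mul_eq_of_lt_mul hk
  exact ⟨i₁, hi₁, i₂, hi₂, rfl⟩

lemma pow_add_mul_pow_eq_of_pow_mul_eq_one {M : Type*} [Monoid M] {a : M} {m₁ m₂ : ℕ}
    (ha : a ^ (m₁ * m₂) = 1) (i₁ i₂ : ℕ) : (a ^ (i₁ + m₁ * i₂)) ^ m₂ = a ^ (m₂ * i₁) := by
  rw [← pow_mul, show (i₁ + m₁ * i₂) * m₂ = m₂ * i₁ + m₁ * m₂ * i₂ by ring, pow_add,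
    pow_mul a (m₁ * m₂), ha, one_pow, mul_one]

-- For `n = 0` the divisor is not monic, and then `%ₘ` returns `p` unchanged.
lemma eval_modByMonic_X_pow_sub_C_of_pow_eq {R : Type*} [CommRing R] {n : ℕ} (p : R[X])
    {β c : R} (hβ : β ^ n = c) : (p %ₘ (X ^ n - C c)).eval β = p.eval β :=
  eval₂_modByMonic_eq_self_of_root (by simp [hβ])

theorem stmt_6_general {F : Type*} [Field F] [Fintype F] (α : Fˣ)
    (hα : ∀ x : Fˣ, x ∈ Subgroup.zpowers α)
    (m1 m2 : ℕ)
    (hm : Fintype.card F - 1 = m1 * m2) (p : F[X]) :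
    {β : F | β ≠ 0 ∧ p.eval β = 0} =
      {β : F | ∃ i1 : ℕ, i1 < m1 ∧ ∃ i2 : ℕ, i2 < m2 ∧
        β = (α : F) ^ (i1 + m1 * i2) ∧
        (p %ₘ ((X : F[X]) ^ m2 - C ((α : F) ^ (m2 * i1)))).eval
          ((α : F) ^ (i1 + m1 * i2)) = 0} := by
  have hcard : Nat.card Fˣ = m1 * m2 := by rw [Nat.card_units, Nat.card_eq_fintype_card, hm]
  have hone : (α : F) ^ (m1 * m2) = 1 := by
    rw [← Units.val_pow_eq_pow_val, ← hcard, pow_card_eq_one', Units.val_one]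
  have heval (i1 i2 : ℕ) :
      (p %ₘ ((X : F[X]) ^ m2 - C ((α : F) ^ (m2 * i1)))).eval ((α : F) ^ (i1 + m1 * i2)) =
        p.eval ((α : F) ^ (i1 + m1 * i2)) :=
    eval_modByMonic_X_pow_sub_C_of_pow_eq p (pow_add_mul_pow_eq_of_pow_mul_eq_one hone i1 i2)
  ext β
  constructor
  · rintro ⟨hβ, hroot⟩
    obtain ⟨i1, hi1, i2, hi2, hpow⟩ :=
      exists_pow_add_mul_eq_of_forall_mem_zpowers hα hcard (Units.mk0 β hβ)
    have hβ_eq : β = (α : F) ^ (i1 + m1 * i2) := by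
      rw [← Units.val_pow_eq_pow_val, hpow, Units.val_mk0]
    exact ⟨i1, hi1, i2, hi2, hβ_eq, by rwa [heval, ← hβ_eq]⟩
  · rintro ⟨i1, -, i2, -, rfl, hroot⟩
    exact ⟨pow_ne_zero _ α.ne_zero, by rwa [heval] at hroot⟩

/-- Full correctness of Algorithm 5: the two-cycle optimized search outputs exactly
the nonzero roots of `p`. -/
theorem stmt_6 {F : Type*} [Field F] [Fintype F] (α : Fˣ)
    (hα : ∀ x : Fˣ, x ∈ Subgroup.zpowers α)
    (m1 m2 : ℕ) (hm1 : 0 < m1) (hm2 : 0 < m2)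
    (hm : Fintype.card F - 1 = m1 * m2) (p : F[X]) :
    {β : F | β ≠ 0 ∧ p.eval β = 0} =
      {β : F | ∃ i1 : ℕ, i1 < m1 ∧ ∃ i2 : ℕ, i2 < m2 ∧
        β = (α : F) ^ (i1 + m1 * i2) ∧
        (p %ₘ ((X : F[X]) ^ m2 - C ((α : F) ^ (m2 * i1)))).eval
          ((α : F) ^ (i1 + m1 * i2)) = 0} :=
  stmt_6_general α hα m1 m2 hm p
end

section
/- Let F be a finite field, α a generator of the multiplicative group F^×, and m = |F| − 1 with m = m1 · m2 (m1, m2 positive integers). Let p be a polynomial over F and i1, i2 natural numbers. Let q = p.comp (C(α^(i1)) · X) be the polynomial obtained from p by the substitution x ↦ α^(i1)·x, and let q2 = q %ₘ (X^(m2) − 1). Then q2.eval (α^(m1·i2)) = p.eval (α^(i1 + m1·i2)). (Correctness of the Chien-style form of the proposed algorithm, Algorithm 6, where the outer loop shifts p by α and the inner loop works modulo x^(m2) + 1.) -/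
open Polynomial

theorem Polynomial.eval_modByMonic_X_pow_sub_one_of_pow_eq_one {R : Type*} [CommRing R]
    (p : R[X]) {n : ℕ} {x : R} (hx : x ^ n = 1) :
    (p %ₘ (X ^ n - 1)).eval x = p.eval x :=
  eval₂_modByMonic_eq_self_of_root (by simp [hx])

theorem FiniteField.pow_mul_pow_eq_one_of_card_sub_one_eq_mul {K : Type*} [Field K] [Fintype K]
    {a : K} (ha : a ≠ 0) {m1 m2 : ℕ} (hm : Fintype.card K - 1 = m1 * m2) (i : ℕ) :
    (a ^ (m1 * i)) ^ m2 = 1 := by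
  rw [← pow_mul, mul_right_comm, ← hm, pow_mul, pow_card_sub_one_eq_one a ha, one_pow]

theorem stmt_7_general {F : Type*} [Field F] [Fintype F] (α : Fˣ)
    (m1 m2 : ℕ)
    (hm : Fintype.card F - 1 = m1 * m2)
    (p : F[X]) (i1 i2 : ℕ) :
    ((p.comp (C ((α : F) ^ i1) * X)) %ₘ ((X : F[X]) ^ m2 - 1)).eval
        ((α : F) ^ (m1 * i2)) =
      p.eval ((α : F) ^ (i1 + m1 * i2)) := by
  rw [eval_modByMonic_X_pow_sub_one_of_pow_eq_one _
      (FiniteField.pow_mul_pow_eq_one_of_card_sub_one_eq_mul α.ne_zero hm i2),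
    eval_comp, eval_mul, eval_C, eval_X, pow_add]

/-- Correctness of the Chien-style form of the proposed algorithm (Algorithm 6). -/
theorem stmt_7 {F : Type*} [Field F] [Fintype F] (α : Fˣ)
    (hα : ∀ x : Fˣ, x ∈ Subgroup.zpowers α)
    (m1 m2 : ℕ) (hm1 : 0 < m1) (hm2 : 0 < m2)
    (hm : Fintype.card F - 1 = m1 * m2)
    (p : F[X]) (i1 i2 : ℕ) :
    ((p.comp (C ((α : F) ^ i1) * X)) %ₘ ((X : F[X]) ^ m2 - 1)).eval
        ((α : F) ^ (m1 * i2)) =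
      p.eval ((α : F) ^ (i1 + m1 * i2)) :=
  stmt_7_general α m1 m2 hm p i1 i2
end

section
/- Let F be a finite field, α a generator of the multiplicative group F^×, and m = |F| − 1 with m = m1 · m2 · m3 (m1, m2, m3 positive integers). Let p be a polynomial over F and i1, i2, i3 natural numbers, and set β = α^(i1 + m1·i2 + m1·m2·i3). Then ((p %ₘ (X^(m2·m3) − C(α^(m2·m3·i1)))) %ₘ (X^(m3) − C(α^(m3·(i1 + m1·i2))))).eval β = p.eval β. (Correctness of the three-level version of the proposed method, as used in Algorithm 7.) -/
open Polynomial

/-! Reducing modulo `X ^ n - C c` does not change the value at any `x` with `x ^ n = c`, and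
`β = α ^ (i1 + m1 i2 + m1 m2 i3)` satisfies `β ^ (m2 m3) = α ^ (m2 m3 i1)` and
`β ^ m3 = α ^ (m3 (i1 + m1 i2))` because `α ^ (m1 m2 m3) = α ^ (|F| - 1) = 1`. -/

theorem eval_modByMonic_X_pow_sub_C {R : Type*} [CommRing R] (p : R[X]) {n : ℕ} {c x : R}
    (h : x ^ n = c) : (p %ₘ (X ^ n - C c)).eval x = p.eval x :=
  eval₂_modByMonic_eq_self_of_root (by simp [h])

theorem FiniteField.pow_add_card_sub_one_mul {K : Type*} [GroupWithZero K] [Fintype K] {a : K}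
    (ha : a ≠ 0) (k j : ℕ) : a ^ (k + (Fintype.card K - 1) * j) = a ^ k := by
  rw [pow_add, pow_mul, FiniteField.pow_card_sub_one_eq_one a ha, one_pow, mul_one]

theorem stmt_10_general {F : Type*} [Field F] [Fintype F] (α : Fˣ)
    (m1 m2 m3 : ℕ)
    (hm : Fintype.card F - 1 = m1 * m2 * m3)
    (p : F[X]) (i1 i2 i3 : ℕ) :
    ((p %ₘ ((X : F[X]) ^ (m2 * m3) - C ((α : F) ^ (m2 * m3 * i1)))) %ₘ
        ((X : F[X]) ^ m3 - C ((α : F) ^ (m3 * (i1 + m1 * i2))))).eval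
        ((α : F) ^ (i1 + m1 * i2 + m1 * m2 * i3)) =
      p.eval ((α : F) ^ (i1 + m1 * i2 + m1 * m2 * i3)) := by
  have hpow := FiniteField.pow_add_card_sub_one_mul α.ne_zero
  rw [hm] at hpow
  have h1 : ((α : F) ^ (i1 + m1 * i2 + m1 * m2 * i3)) ^ (m2 * m3)
      = (α : F) ^ (m2 * m3 * i1) := by
    rw [← pow_mul, ← hpow (m2 * m3 * i1) (i2 + m2 * i3)]
    ring_nf
  have h2 : ((α : F) ^ (i1 + m1 * i2 + m1 * m2 * i3)) ^ m3
      = (α : F) ^ (m3 * (i1 + m1 * i2)) := by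
    rw [← pow_mul, ← hpow (m3 * (i1 + m1 * i2)) i3]
    ring_nf
  rw [eval_modByMonic_X_pow_sub_C _ h2, eval_modByMonic_X_pow_sub_C _ h1]

/-- Correctness of the three-level version of the proposed method (Algorithm 7). -/
theorem stmt_10 {F : Type*} [Field F] [Fintype F] (α : Fˣ)
    (hα : ∀ x : Fˣ, x ∈ Subgroup.zpowers α)
    (m1 m2 m3 : ℕ) (hm1 : 0 < m1) (hm2 : 0 < m2) (hm3 : 0 < m3)
    (hm : Fintype.card F - 1 = m1 * m2 * m3)
    (p : F[X]) (i1 i2 i3 : ℕ) :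
    ((p %ₘ ((X : F[X]) ^ (m2 * m3) - C ((α : F) ^ (m2 * m3 * i1)))) %ₘ
        ((X : F[X]) ^ m3 - C ((α : F) ^ (m3 * (i1 + m1 * i2))))).eval
        ((α : F) ^ (i1 + m1 * i2 + m1 * m2 * i3)) =
      p.eval ((α : F) ^ (i1 + m1 * i2 + m1 * m2 * i3)) :=
  stmt_10_general α m1 m2 m3 hm p i1 i2 i3
end
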